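/- Fix real numbers s, h, and p, and let l₀ ∈ ℝ be such that B(p) > 0 and (h + (1−2s) − A(p))² < B(p) when the parameter l equals l₀. Then the function l ↦ arccos((h + (1−2s) − A(p))/√(B(p))) (with A and B depending on l) is differentiable at l = l₀ with derivative R_W(p)/√(P(p)), where R_W and P are formed with l = l₀. (This is the pointwise form of the formula 𝒲 = −∂𝓘/∂l = C + (1/2π)∮ R_W(p) dp/√P for the rotation number.) -/

import Mathlib

/-- `A_s^l(p) = l + 1 − p − 2s − l·s + (3/2)·s·p`. -/
noncomputable def redA (s l p : ℝ) : ℝ := l + 1 - p - 2 * s - l * s + 3 / 2 * s * p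

/-- `B_s^l(p) = s²(1−s)²·p·(p−l)·(p−4)·(p−2−l)`. -/
noncomputable def redB (s l p : ℝ) : ℝ :=
  s ^ 2 * (1 - s) ^ 2 * p * (p - l) * (p - 4) * (p - 2 - l)

/-- `P_{l,h}^s(p) = B_s^l(p) − (h + (1−2s) − A_s^l(p))²`. -/
noncomputable def redP (s l h p : ℝ) : ℝ := redB s l p - (h + (1 - 2 * s) - redA s l p) ^ 2

/-- `R_W(p) = s/2 − (h − h_l)/(2(p−l)) − (h − h_{2+l})/(2(p−2−l))`, where `h_l = s·l/2` and
`h_{2+l} = 3(s−2/3) + s·l/2`. -/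
noncomputable def RW (s l h p : ℝ) : ℝ :=
  s / 2 - (h - s * l / 2) / (2 * (p - l)) -
    (h - (3 * (s - 2 / 3) + s * l / 2)) / (2 * (p - 2 - l))

/-- Pointwise form of `𝒲 = −∂𝓘/∂l`: for fixed `s, h, p`, if `B(p) > 0` and
`(h + (1−2s) − A(p))² < B(p)` at `l = l₀`, then the map
`l ↦ arccos((h + (1−2s) − A(p))/√(B(p)))` has derivative `R_W(p)/√(P(p))` at `l₀`. -/
theorem rotation_number_kernel (s h p l₀ : ℝ) (hB : 0 < redB s l₀ p)
    (hh : (h + (1 - 2 * s) - redA s l₀ p) ^ 2 < redB s l₀ p) :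
    HasDerivAt
      (fun l : ℝ => Real.arccos ((h + (1 - 2 * s) - redA s l p) / Real.sqrt (redB s l p)))
      (RW s l₀ h p / Real.sqrt (redP s l₀ h p)) l₀ := by
  set b := redB s l₀ p with hbdef
  set g := h + (1 - 2 * s) - redA s l₀ p with hgdef
  have hP : 0 < redP s l₀ h p := by
    simpa [redP] using sub_pos.mpr hh
  have hbne : b ≠ 0 := ne_of_gt hB
  have hpl : p - l₀ ≠ 0 := by
    intro hz
    apply hbne; rw [hbdef]; unfold redB; rw [hz]; ring
  have hpl2 : p - 2 - l₀ ≠ 0 := by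
    intro hz
    apply hbne; rw [hbdef]; unfold redB; rw [hz]; ring
  set sb := Real.sqrt b with hsbdef
  have hsb : 0 < sb := Real.sqrt_pos.mpr hB
  have hsb2 : sb ^ 2 = b := Real.sq_sqrt hB.le
  set sP := Real.sqrt (redP s l₀ h p) with hsPdef
  have hsP : 0 < sP := Real.sqrt_pos.mpr hP
  have hsP2 : sP ^ 2 = redP s l₀ h p := Real.sq_sqrt hP.le
  -- derivative of g(l)
  have hG : HasDerivAt (fun l : ℝ => h + (1 - 2 * s) - redA s l p) (s - 1) l₀ := by
    have h1 : HasDerivAt (fun l : ℝ => (s - 1) * l + (h + (1 - 2 * s) - (1 - p - 2 * s + 3 / 2 * s * p)))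
        ((s - 1) * 1) l₀ := ((hasDerivAt_id l₀).const_mul (s - 1)).add_const _
    have heq : (fun l : ℝ => h + (1 - 2 * s) - redA s l p)
        = fun l : ℝ => (s - 1) * l + (h + (1 - 2 * s) - (1 - p - 2 * s + 3 / 2 * s * p)) := by
      funext l; unfold redA; ring
    rw [heq]
    simpa using h1
  -- derivative of b(l)
  set bd : ℝ := s ^ 2 * (1 - s) ^ 2 * p * (p - 4) * ((-1) * (p - 2 - l₀) + (p - l₀) * (-1)) with hbddef
  have hBd : HasDerivAt (fun l : ℝ => redB s l p) bd l₀ := by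
    have e1 : HasDerivAt (fun l : ℝ => p - l) (-1) l₀ := (hasDerivAt_id l₀).const_sub p
    have e2 : HasDerivAt (fun l : ℝ => p - 2 - l) (-1) l₀ := (hasDerivAt_id l₀).const_sub (p - 2)
    have e3 := e1.mul e2
    have e4 := e3.const_mul (s ^ 2 * (1 - s) ^ 2 * p * (p - 4))
    have heq : (fun l : ℝ => redB s l p)
        = fun l : ℝ => s ^ 2 * (1 - s) ^ 2 * p * (p - 4) * ((p - l) * (p - 2 - l)) := by
      funext l; unfold redB; ring
    rw [heq, hbddef]
    exact e4
  -- derivative of sqrt(b l)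
  have hSq : HasDerivAt (fun l : ℝ => Real.sqrt (redB s l p)) (bd / (2 * sb)) l₀ :=
    hBd.sqrt hbne
  -- derivative of the quotient
  set Fd : ℝ := ((s - 1) * sb - g * (bd / (2 * sb))) / sb ^ 2 with hFddef
  have hF : HasDerivAt (fun l : ℝ => (h + (1 - 2 * s) - redA s l p) / Real.sqrt (redB s l p))
      Fd l₀ := hG.div hSq (ne_of_gt hsb)
  -- bounds on F₀ = g / sb
  have hF0sq : (g / sb) ^ 2 < 1 := by
    rw [div_pow, hsb2, div_lt_one hB]
    exact hh
  have hF0abs : |g / sb| < 1 := by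
    rw [← Real.sqrt_one, ← Real.sqrt_sq_eq_abs]
    exact Real.sqrt_lt_sqrt (sq_nonneg _) hF0sq
  have hne1 : g / sb ≠ 1 := by
    intro hz; rw [hz] at hF0abs; simp at hF0abs
  have hne1' : g / sb ≠ -1 := by
    intro hz; rw [hz] at hF0abs; simp at hF0abs
  have harccos := (Real.hasDerivAt_arccos hne1' hne1).comp l₀ hF
  -- identify sqrt(1 - F₀²)
  have hkey : Real.sqrt (1 - (g / sb) ^ 2) = sP / sb := by
    have h1 : 1 - (g / sb) ^ 2 = redP s l₀ h p / b := by
      rw [div_pow, hsb2]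
      field_simp [redP]
      rfl
    rw [h1, Real.sqrt_div hP.le, ← hsbdef, ← hsPdef]
  -- final algebraic identification
  have h1 : -sb * Fd = ((1 - s) * b + g * bd / 2) / b := by
    rw [hFddef, ← hsb2]
    field_simp
    ring
  have h2 : ((1 - s) * b + g * bd / 2) / b = RW s l₀ h p := by
    rw [hbdef, hbddef, hgdef]
    unfold RW redB redA
    have hbne' : s ^ 2 * (1 - s) ^ 2 * p * (p - l₀) * (p - 4) * (p - 2 - l₀) ≠ 0 := hbne
    have hs0 : s ≠ 0 := fun hz => hbne' (by rw [hz]; ring)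
    have hs1 : 1 - s ≠ 0 := fun hz => hbne' (by rw [hz]; ring)
    have hp0 : p ≠ 0 := fun hz => hbne' (by rw [hz]; ring)
    have hp4 : p - 4 ≠ 0 := fun hz => hbne' (by rw [hz]; ring)
    field_simp
    ring
  have hfinal : -(1 / Real.sqrt (1 - (g / sb) ^ 2)) * Fd = RW s l₀ h p / sP := by
    rw [hkey, ← h2, ← h1]
    rw [one_div, inv_div]
    field_simp
  rw [← hfinal]
  exact harccos
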